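/- Every geodesic triangle in the hyperbolic plane is δ-thin with δ = log(1 + √2): for any point p on one side of the triangle, there exists a point q on one of the other two sides with d(p, q) ≤ log(1 + √2). -/

import Mathlib

open Real Set
open scoped UpperHalfPlane

/-- A unit-speed geodesic from `x` to `y` in the hyperbolic plane, defined on
`[0, dist x y]`. -/
def IsGeodesicFromTo (γ : ℝ → ℍ) (x y : ℍ) : Prop :=
  γ 0 = x ∧ γ (dist x y) = y ∧
    ∀ s ∈ Icc 0 (dist x y), ∀ t ∈ Icc 0 (dist x y), dist (γ s) (γ t) = |s - t|

/-- The geodesic segment (side) from `x` to `y` traced by `γ`. -/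
def geodSeg (γ : ℝ → ℍ) (x y : ℍ) : Set ℍ := γ '' Icc 0 (dist x y)

/-!
Isometries of `ℍ` (real translations, dilations and `z ↦ -1/z`) move `p` to `I` and the side
`AB` onto the imaginary axis with `A.im ≤ 1 ≤ B.im`. The hyperbolic disc of radius
`log (1 + √2)` about `I` is the euclidean disc of radius `1` about `√2 I`, so we may assume
`B.im > 1 + √2` and `A.im < √2 - 1`. If `|C| ≤ 1`, the side `BC` runs from outside the circle
`|z| = √3` into the unit disc. It lies on the geodesic line through `B` and `C`, and the point
where it meets `|z| = √3` has height at least `√2`, so it lies in the disc about `√2 I`. If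
`|C| > 1`, the same argument applies to the side `CA` after `z ↦ -1/z`, which fixes `I`, sends
`A` above `1 + √2` and `C` into the unit disc.

Geodesic segments are located through the equality case of
`dist (log z.im) (log w.im) ≤ dist z w`, which keeps a segment between two points of a vertical
line on that line; `z ↦ -1/(z - c - r)` maps the circle of centre `c` and radius `r` onto a
vertical line.
-/

open UpperHalfPlane ModularGroup
open scoped MatrixGroups

namespace IsGeodesicFromTo

variable {γ : ℝ → ℍ} {x y : ℍ}

theorem left_mem_geodSeg (hγ : IsGeodesicFromTo γ x y) : x ∈ geodSeg γ x y :=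
  ⟨0, left_mem_Icc.2 dist_nonneg, hγ.1⟩

theorem right_mem_geodSeg (hγ : IsGeodesicFromTo γ x y) : y ∈ geodSeg γ x y :=
  ⟨dist x y, right_mem_Icc.2 dist_nonneg, hγ.2.1⟩

theorem dist_add_dist (hγ : IsGeodesicFromTo γ x y) {s : ℝ} (hs : s ∈ Icc 0 (dist x y)) :
    dist x (γ s) + dist (γ s) y = dist x y := by
  have hx := hγ.2.2 0 (left_mem_Icc.2 dist_nonneg) s hs
  have hy := hγ.2.2 s hs _ (right_mem_Icc.2 dist_nonneg)
  rw [hγ.1] at hx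
  rw [hγ.2.1] at hy
  rw [hx, hy, abs_of_nonpos (by linarith [hs.1]), abs_of_nonpos (by linarith [hs.2])]
  ring

theorem isPreconnected_geodSeg (hγ : IsGeodesicFromTo γ x y) :
    IsPreconnected (geodSeg γ x y) := by
  refine isPreconnected_Icc.image γ (LipschitzOnWith.continuousOn (K := 1) ?_)
  refine LipschitzOnWith.of_dist_le_mul fun s hs t ht => ?_
  simp [hγ.2.2 s hs t ht, Real.dist_eq]

theorem symm (hγ : IsGeodesicFromTo γ x y) :
    IsGeodesicFromTo (fun t => γ (dist x y - t)) y x := by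
  rw [IsGeodesicFromTo, dist_comm y x, sub_zero, sub_self]
  refine ⟨hγ.2.1, hγ.1, fun s hs t ht => ?_⟩
  rw [hγ.2.2 _ ⟨by linarith [hs.2], by linarith [hs.1]⟩ _
    ⟨by linarith [ht.2], by linarith [ht.1]⟩, abs_sub_comm]
  ring_nf

theorem comp (hγ : IsGeodesicFromTo γ x y) {T : ℍ → ℍ} (hT : Isometry T) :
    IsGeodesicFromTo (T ∘ γ) (T x) (T y) := by
  rw [IsGeodesicFromTo, hT.dist_eq]
  exact ⟨congrArg T hγ.1, congrArg T hγ.2.1,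
    fun s hs t ht => (hT.dist_eq _ _).trans (hγ.2.2 s hs t ht)⟩

end IsGeodesicFromTo

theorem geodSeg_reverse (γ : ℝ → ℍ) (x y : ℍ) :
    geodSeg (fun t => γ (dist x y - t)) y x = geodSeg γ x y := by
  rw [geodSeg, geodSeg, dist_comm y x, ← image_image (f := fun t => dist x y - t),
    image_const_sub_Icc, sub_zero, sub_self]

theorem geodSeg_comp {T : ℍ → ℍ} (hT : Isometry T) (γ : ℝ → ℍ) (x y : ℍ) :
    geodSeg (T ∘ γ) (T x) (T y) = T '' geodSeg γ x y := by
  rw [geodSeg, geodSeg, hT.dist_eq, image_comp]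

theorem re_eq_of_dist_eq_dist_log_im {z w : ℍ}
    (h : dist z w = dist (log z.im) (log w.im)) : z.re = w.re := by
  have hz := z.im_pos
  have hw := w.im_pos
  have hcosh := cosh_dist' z w
  rw [h, Real.dist_eq, cosh_abs, ← log_div hz.ne' hw.ne', cosh_log (by positivity)] at hcosh
  field_simp at hcosh
  nlinarith [sq_nonneg (z.re - w.re)]

theorem re_eq_and_im_mem_uIcc_of_dist_add_dist_eq {x y z : ℍ} (hxy : x.re = y.re)
    (h : dist x z + dist z y = dist x y) : z.re = x.re ∧ z.im ∈ uIcc x.im y.im := by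
  have hxz := dist_log_im_le x z
  have hzy := dist_log_im_le z y
  have hlog := dist_triangle (log x.im) (log z.im) (log y.im)
  rw [dist_of_re_eq hxy] at h
  have hbtw : dist (log x.im) (log z.im) + dist (log z.im) (log y.im)
      = dist (log x.im) (log y.im) := by linarith
  rw [dist_add_dist_eq_iff, ← mem_segment_iff_wbtw, segment_eq_uIcc] at hbtw
  refine ⟨(re_eq_of_dist_eq_dist_log_im (by linarith)).symm, ?_⟩
  simpa only [exp_log x.im_pos, exp_log y.im_pos, exp_log z.im_pos] using
    Real.exp_monotone.image_uIcc_subset (mem_image_of_mem _ hbtw)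

theorem isometry_S_smul : Isometry (S • · : ℍ → ℍ) :=
  isometry_smul ℍ (S : SL(2, ℝ))

theorem S_smul_I : S • I = I := by
  rw [modular_S_smul]
  ext
  simp

theorem re_S_smul (z : ℍ) : (S • z).re = -z.re / (z.re ^ 2 + z.im ^ 2) := by
  rw [modular_S_smul, mk_re, Complex.inv_re, Complex.neg_re, Complex.normSq_neg,
    Complex.normSq_apply, coe_re, coe_im]
  ring

theorem im_S_smul (z : ℍ) : (S • z).im = z.im / (z.re ^ 2 + z.im ^ 2) := by
  rw [modular_S_smul, mk_im, Complex.inv_im, Complex.neg_im, Complex.normSq_neg,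
    Complex.normSq_apply, coe_re, coe_im]
  ring

theorem re_sq_add_im_sq_S_smul (z : ℍ) :
    (S • z).re ^ 2 + (S • z).im ^ 2 = (z.re ^ 2 + z.im ^ 2)⁻¹ := by
  have : 0 < z.re ^ 2 + z.im ^ 2 := by positivity
  rw [re_S_smul, im_S_smul]
  field_simp

theorem re_S_smul_vadd_eq_iff {c r : ℝ} (hr : 0 < r) (z : ℍ) :
    (S • (-(c + r) +ᵥ z)).re = (2 * r)⁻¹ ↔ (z.re - c) ^ 2 + z.im ^ 2 = r ^ 2 := by
  have : 0 < (-(c + r) + z.re) ^ 2 + z.im ^ 2 := by positivity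
  rw [re_S_smul, vadd_re, vadd_im]
  constructor
  · intro h
    field_simp at h
    linarith
  · intro h
    field_simp
    linarith

theorem isometry_S_smul_vadd (a : ℝ) : Isometry (fun z : ℍ => S • (a +ᵥ z)) :=
  Function.comp_def (S • · : ℍ → ℍ) (a +ᵥ ·) ▸ isometry_S_smul.comp (isometry_real_vadd a)

theorem IsGeodesicFromTo.sq_add_sq_eq_of_mem_geodSeg {γ : ℝ → ℍ} {x y z : ℍ} {c r : ℝ}
    (hγ : IsGeodesicFromTo γ x y) (hr : 0 < r)
    (hx : (x.re - c) ^ 2 + x.im ^ 2 = r ^ 2) (hy : (y.re - c) ^ 2 + y.im ^ 2 = r ^ 2)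
    (hz : z ∈ geodSeg γ x y) : (z.re - c) ^ 2 + z.im ^ 2 = r ^ 2 := by
  obtain ⟨s, hs, rfl⟩ := hz
  have hM := isometry_S_smul_vadd (-(c + r))
  have hadd := hγ.dist_add_dist hs
  rw [← hM.dist_eq x, ← hM.dist_eq (γ s), ← hM.dist_eq x y] at hadd
  rw [← re_S_smul_vadd_eq_iff hr] at hx hy ⊢
  exact (re_eq_and_im_mem_uIcc_of_dist_add_dist_eq (hx.trans hy.symm) hadd).1.trans hx

theorem exists_isometry_re_eq (x y : ℍ) :
    ∃ T : ℍ → ℍ, Isometry T ∧ (T x).re = (T y).re := by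
  rcases eq_or_ne x.re y.re with h | h
  · exact ⟨id, isometry_id, h⟩
  obtain ⟨c, hc⟩ :
      ∃ c : ℝ, 2 * (x.re - y.re) * c = x.re ^ 2 + x.im ^ 2 - y.re ^ 2 - y.im ^ 2 :=
    ⟨_, mul_div_cancel₀ _ (mul_ne_zero two_ne_zero (sub_ne_zero.2 h))⟩
  set r := √((x.re - c) ^ 2 + x.im ^ 2)
  have hr : 0 < r := sqrt_pos.2 (by have := x.im_pos; positivity)
  have hx : (x.re - c) ^ 2 + x.im ^ 2 = r ^ 2 := (sq_sqrt (by positivity)).symm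
  have hy : (y.re - c) ^ 2 + y.im ^ 2 = r ^ 2 := by rw [← hx]; linarith
  refine ⟨_, isometry_S_smul_vadd (-(c + r)), ?_⟩
  rw [(re_S_smul_vadd_eq_iff hr x).2 hx, (re_S_smul_vadd_eq_iff hr y).2 hy]

theorem re_S_smul_of_re_eq_zero {z : ℍ} (hz : z.re = 0) : (S • z).re = 0 := by
  rw [re_S_smul, hz, neg_zero, zero_div]

theorem im_S_smul_of_re_eq_zero {z : ℍ} (hz : z.re = 0) : (S • z).im = z.im⁻¹ := by
  have := z.im_pos
  rw [im_S_smul, hz]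
  field_simp
  ring

theorem exists_isometry_re_eq_zero_im_eq_one (x y p : ℍ) :
    ∃ T : ℍ → ℍ, Isometry T ∧ (T x).re = 0 ∧ (T y).re = 0 ∧ (T p).im = 1 := by
  obtain ⟨T, hT, hxy⟩ := exists_isometry_re_eq x y
  let k : {t : ℝ // 0 < t} := ⟨(T p).im⁻¹, inv_pos.2 (T p).im_pos⟩
  refine ⟨fun z => k • (-(T x).re +ᵥ T z),
    (isometry_pos_mul k).comp ((isometry_real_vadd _).comp hT), ?_, ?_, ?_⟩
  · simp only [pos_real_re, vadd_re, neg_add_cancel, mul_zero]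
  · simp only [pos_real_re, vadd_re, hxy, neg_add_cancel, mul_zero]
  · simp only [pos_real_im, vadd_im]
    exact inv_mul_cancel₀ (T p).im_pos.ne'

theorem exists_isometry_eq_I_of_dist_add_dist_eq {x p y : ℍ}
    (h : dist x p + dist p y = dist x y) :
    ∃ T : ℍ → ℍ, Isometry T ∧ T p = I ∧ (T x).re = 0 ∧ (T y).re = 0 ∧
      (T x).im ≤ 1 ∧ 1 ≤ (T y).im := by
  obtain ⟨T, hT, hx, hy, hp⟩ := exists_isometry_re_eq_zero_im_eq_one x y p
  rw [← hT.dist_eq x, ← hT.dist_eq p, ← hT.dist_eq x y] at h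
  obtain ⟨hpre, hpim⟩ := re_eq_and_im_mem_uIcc_of_dist_add_dist_eq (hx.trans hy.symm) h
  have hTp : T p = I := ext_re_im (hpre.trans (hx.trans I_re.symm)) (hp.trans I_im.symm)
  rw [hp] at hpim
  rcases mem_uIcc.1 hpim with ⟨hx1, h1y⟩ | ⟨hy1, h1x⟩
  · exact ⟨T, hT, hTp, hx, hy, hx1, h1y⟩
  · refine ⟨(S • ·) ∘ T, isometry_S_smul.comp hT,
      by simp only [Function.comp_apply, hTp, S_smul_I], re_S_smul_of_re_eq_zero hx,
      re_S_smul_of_re_eq_zero hy, ?_, ?_⟩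
    · rw [Function.comp_apply, im_S_smul_of_re_eq_zero hx]
      exact inv_le_one_of_one_le₀ h1x
    · rw [Function.comp_apply, im_S_smul_of_re_eq_zero hy]
      exact one_le_inv₀ (T y).im_pos |>.2 hy1

theorem dist_I_le_log_one_add_sqrt_two {q : ℍ} (h : q.re ^ 2 + (q.im - √2) ^ 2 ≤ 1) :
    dist I q ≤ log (1 + √2) := by
  have hq := q.im_pos
  have hs : √2 ^ 2 = 2 := sq_sqrt zero_le_two
  have hδ : 0 ≤ log (1 + √2) := log_nonneg (le_add_of_nonneg_right (sqrt_nonneg 2))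
  have hcosh : cosh (log (1 + √2)) = √2 := by
    rw [cosh_log (by positivity)]
    field_simp
    nlinarith
  rw [← abs_of_nonneg dist_nonneg, ← abs_of_nonneg hδ, ← cosh_le_cosh, hcosh, cosh_dist', I_re,
    I_im, div_le_iff₀ (by positivity)]
  nlinarith

/-- `z` lies on the geodesic line through `P` and `W`: the circle centred on `ℝ` through them,
or the imaginary axis if `W.re = 0`. -/
theorem IsGeodesicFromTo.re_mul_eq_of_mem_geodSeg {γ : ℝ → ℍ} {P W z : ℍ}
    (hγ : IsGeodesicFromTo γ P W) (hP : P.re = 0) (hz : z ∈ geodSeg γ P W) :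
    W.re * (z.re ^ 2 + z.im ^ 2 - P.im ^ 2) = (W.re ^ 2 + W.im ^ 2 - P.im ^ 2) * z.re := by
  rcases eq_or_ne W.re 0 with hW | hW
  · obtain ⟨s, hs, rfl⟩ := hz
    have hre := (re_eq_and_im_mem_uIcc_of_dist_add_dist_eq (hP.trans hW.symm)
      (hγ.dist_add_dist hs)).1
    rw [hW, hre, hP]
    ring
  obtain ⟨c, hc⟩ : ∃ c : ℝ, 2 * W.re * c = W.re ^ 2 + W.im ^ 2 - P.im ^ 2 :=
    ⟨_, mul_div_cancel₀ _ (mul_ne_zero two_ne_zero hW)⟩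
  have hr : 0 ≤ c ^ 2 + P.im ^ 2 := by positivity
  have hPc : (P.re - c) ^ 2 + P.im ^ 2 = √(c ^ 2 + P.im ^ 2) ^ 2 := by
    rw [sq_sqrt hr, hP]
    ring
  have hWc : (W.re - c) ^ 2 + W.im ^ 2 = √(c ^ 2 + P.im ^ 2) ^ 2 := by
    rw [sq_sqrt hr]
    linear_combination -hc
  have hzc := hγ.sq_add_sq_eq_of_mem_geodSeg (sqrt_pos.2 (by have := P.im_pos; positivity))
    hPc hWc hz
  rw [sq_sqrt hr] at hzc
  linear_combination W.re * hzc + z.re * hc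

theorem IsGeodesicFromTo.exists_mem_geodSeg_dist_I_le {γ : ℝ → ℍ} {P W : ℍ}
    (hγ : IsGeodesicFromTo γ P W) (hP : P.re = 0) (hP3 : 3 ≤ P.im ^ 2)
    (hW : W.re ^ 2 + W.im ^ 2 ≤ 1) :
    ∃ q ∈ geodSeg γ P W, dist I q ≤ log (1 + √2) := by
  have hcont : Continuous fun z : ℍ => z.re ^ 2 + z.im ^ 2 := by fun_prop
  obtain ⟨q, hq, hq3 : q.re ^ 2 + q.im ^ 2 = 3⟩ := hγ.isPreconnected_geodSeg.intermediate_value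
    hγ.right_mem_geodSeg hγ.left_mem_geodSeg hcont.continuousOn
    (show (3 : ℝ) ∈ Icc _ _ from ⟨by linarith, by rw [hP]; linarith⟩)
  have hline := hγ.re_mul_eq_of_mem_geodSeg hP hq
  rw [hq3] at hline
  set d := P.im ^ 2 - (W.re ^ 2 + W.im ^ 2)
  have hd : 0 < d := by linarith
  have hsq : q.re ^ 2 * d ^ 2 = W.re ^ 2 * (P.im ^ 2 - 3) ^ 2 := by
    linear_combination (-(W.re * (3 - P.im ^ 2)) - (W.re ^ 2 + W.im ^ 2 - P.im ^ 2) * q.re) * hline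
  have hre : q.re ^ 2 ≤ 1 := by
    refine le_of_mul_le_mul_right ?_ (pow_pos hd 2)
    rw [hsq]
    gcongr
    · nlinarith [W.im_pos]
    · linarith
  refine ⟨q, hq, dist_I_le_log_one_add_sqrt_two ?_⟩
  have hs : √2 ^ 2 = 2 := sq_sqrt zero_le_two
  have := q.im_pos
  nlinarith [sq_nonneg (√2 * q.im - 2), sqrt_nonneg 2]

theorem exists_mem_sides_dist_I_le {A B C : ℍ} {γ₂ γ₃ : ℝ → ℍ}
    (h₂ : IsGeodesicFromTo γ₂ B C) (h₃ : IsGeodesicFromTo γ₃ C A)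
    (hA : A.re = 0) (hB : B.re = 0) (hA1 : A.im ≤ 1) (hB1 : 1 ≤ B.im) :
    ∃ q ∈ geodSeg γ₂ B C ∪ geodSeg γ₃ C A, dist I q ≤ log (1 + √2) := by
  have hs : √2 ^ 2 = 2 := sq_sqrt zero_le_two
  have hs1 : 1 < √2 := by nlinarith [sqrt_nonneg 2]
  have hs2 : √2 < 2 := by nlinarith
  by_cases hBnear : B.im ≤ 1 + √2
  · exact ⟨B, Or.inl h₂.left_mem_geodSeg,
      dist_I_le_log_one_add_sqrt_two (by
        rw [hB]; nlinarith [mul_nonneg (sub_nonneg.2 hBnear) (by linarith : 0 ≤ B.im - (√2 - 1))])⟩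
  by_cases hAnear : √2 - 1 ≤ A.im
  · exact ⟨A, Or.inr h₃.right_mem_geodSeg,
      dist_I_le_log_one_add_sqrt_two (by
        rw [hA]; nlinarith [mul_nonneg (sub_nonneg.2 hAnear) (by linarith : 0 ≤ √2 + 1 - A.im)])⟩
  push Not at hBnear hAnear
  by_cases hC : C.re ^ 2 + C.im ^ 2 ≤ 1
  · obtain ⟨q, hq, hqI⟩ := h₂.exists_mem_geodSeg_dist_I_le hB (by nlinarith) hC
    exact ⟨q, Or.inl hq, hqI⟩
  have hSA3 : 3 ≤ (S • A).im ^ 2 := by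
    have : √2 + 1 ≤ A.im⁻¹ := by
      rw [le_inv_comm₀ (by positivity) A.im_pos]
      have : (√2 + 1)⁻¹ = √2 - 1 := inv_eq_of_mul_eq_one_right (by nlinarith)
      linarith
    rw [im_S_smul_of_re_eq_zero hA]
    nlinarith
  have hSC : (S • C).re ^ 2 + (S • C).im ^ 2 ≤ 1 := by
    rw [re_sq_add_im_sq_S_smul]
    exact inv_le_one_of_one_le₀ (not_le.1 hC).le
  obtain ⟨q, hq, hqI⟩ := (h₃.symm.comp isometry_S_smul).exists_mem_geodSeg_dist_I_le
    (re_S_smul_of_re_eq_zero hA) hSA3 hSC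
  rw [geodSeg_comp isometry_S_smul, geodSeg_reverse] at hq
  obtain ⟨q, hq, rfl⟩ := hq
  refine ⟨q, Or.inr hq, ?_⟩
  rwa [← S_smul_I, isometry_S_smul.dist_eq] at hqI

/-- Every geodesic triangle in the hyperbolic plane is `δ`-thin with
`δ = log (1 + √2)`: any point on one side is within distance `log (1 + √2)` of
one of the other two sides. -/
theorem hyperbolic_triangles_thin (A B C : ℍ) (γ₁ γ₂ γ₃ : ℝ → ℍ)
    (h₁ : IsGeodesicFromTo γ₁ A B) (h₂ : IsGeodesicFromTo γ₂ B C)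
    (h₃ : IsGeodesicFromTo γ₃ C A) :
    ∀ p ∈ geodSeg γ₁ A B, ∃ q ∈ geodSeg γ₂ B C ∪ geodSeg γ₃ C A,
      dist p q ≤ Real.log (1 + Real.sqrt 2) := by
  rintro _ ⟨s, hs, rfl⟩
  obtain ⟨T, hT, hTp, hA, hB, hA1, hB1⟩ :=
    exists_isometry_eq_I_of_dist_add_dist_eq (h₁.dist_add_dist hs)
  obtain ⟨q, hq, hqI⟩ := exists_mem_sides_dist_I_le (h₂.comp hT) (h₃.comp hT) hA hB hA1 hB1
  rw [geodSeg_comp hT, geodSeg_comp hT, ← image_union] at hq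
  obtain ⟨q, hq, rfl⟩ := hq
  exact ⟨q, hq, by rwa [← hT.dist_eq, hTp]⟩
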